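/- arXiv:2507.22170 — 5 statements merged into one kernel-verified Lean document; each statement's English description precedes it below -/
import Mathlib

section
/- Let β ∈ ℝ^M with 0 ≤ β i < 1 for all i and at least one β i > 0, and let S = ∑ i, β i ^ 2 / (1 - β i ^ 2). For any x ∈ ℝ^M with x ≠ 0, define R(x) = (βᵀ x)^2 / (xᵀ A_β x), where A_β = β βᵀ + diag(1 - β i ^ 2). Then R(x) ≤ S/(S+1) for all x ≠ 0, with equality when x i = β i / (1 - β i ^ 2). -/
/-!
Write `Q(x) = ∑ dᵢ xᵢ²` with `dᵢ = 1 - βᵢ² > 0`, so that `xᵀ A_β x = (βᵀx)² + Q(x)`.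
Cauchy–Schwarz with weights `dᵢ` gives `(βᵀx)² ≤ S · Q(x)`, and `u ↦ u / (u + Q)` is increasing,
so `R(x) ≤ S Q / (S Q + Q) = S / (S + 1)`. At `xᵢ = βᵢ / dᵢ` Cauchy–Schwarz is an equality:
`βᵀx = Q(x) = S`.
-/

open Matrix

variable {ι : Type*} [Fintype ι]

theorem Matrix.dotProduct_mulVec_vecMulVec_add_diagonal {R : Type*} [CommRing R] [DecidableEq ι]
    (b d x : ι → R) :
    x ⬝ᵥ (vecMulVec b b + diagonal d) *ᵥ x = (b ⬝ᵥ x) ^ 2 + ∑ i, d i * x i ^ 2 := by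
  have hdiag : diagonal d *ᵥ x = fun i => d i * x i := funext (mulVec_diagonal d x)
  rw [add_mulVec, dotProduct_add, vecMulVec_mulVec, hdiag]
  simp only [dotProduct, Pi.smul_apply, MulOpposite.smul_eq_mul_unop, MulOpposite.unop_op]
  rw [sq, Finset.sum_mul]
  congr 1 <;> exact Finset.sum_congr rfl fun i _ => by ring

theorem sq_dotProduct_le_sum_sq_div_mul_sum_mul_sq {b d : ι → ℝ} (hd : ∀ i, 0 < d i)
    (x : ι → ℝ) :
    (b ⬝ᵥ x) ^ 2 ≤ (∑ i, b i ^ 2 / d i) * ∑ i, d i * x i ^ 2 :=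
  Finset.sum_sq_le_sum_mul_sum_of_sq_le_mul _
    (fun i _ => div_nonneg (sq_nonneg _) (hd i).le)
    (fun i _ => mul_nonneg (hd i).le (sq_nonneg _))
    (fun i _ => le_of_eq (by field_simp [(hd i).ne']))

theorem div_add_le_div_add_one {u Q S : ℝ} (hu : 0 ≤ u) (hQ : 0 < Q) (hS : 0 ≤ S)
    (h : u ≤ S * Q) :
    u / (u + Q) ≤ S / (S + 1) := by
  rw [div_le_div_iff₀ (by positivity) (by positivity)]
  nlinarith

theorem sum_mul_sq_pos {d : ι → ℝ} (hd : ∀ i, 0 < d i) {x : ι → ℝ} (hx : x ≠ 0) :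
    0 < ∑ i, d i * x i ^ 2 := by
  obtain ⟨i, hi⟩ := Function.ne_iff.mp hx
  exact Finset.sum_pos' (fun j _ => mul_nonneg (hd j).le (sq_nonneg _))
    ⟨i, Finset.mem_univ i, mul_pos (hd i) (sq_pos_of_ne_zero hi)⟩

section WeightedRayleigh

variable [DecidableEq ι] {b d : ι → ℝ}

theorem sq_dotProduct_div_le (hd : ∀ i, 0 < d i) {x : ι → ℝ} (hx : x ≠ 0) :
    (b ⬝ᵥ x) ^ 2 / (x ⬝ᵥ (vecMulVec b b + diagonal d) *ᵥ x) ≤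
      (∑ i, b i ^ 2 / d i) / ((∑ i, b i ^ 2 / d i) + 1) := by
  rw [dotProduct_mulVec_vecMulVec_add_diagonal]
  exact div_add_le_div_add_one (sq_nonneg _) (sum_mul_sq_pos hd hx)
    (Finset.sum_nonneg fun i _ => div_nonneg (sq_nonneg _) (hd i).le)
    (sq_dotProduct_le_sum_sq_div_mul_sum_mul_sq hd x)

theorem sq_dotProduct_div_eq_of_optimal (hd : ∀ i, d i ≠ 0) :
    (b ⬝ᵥ fun i => b i / d i) ^ 2 /
        ((fun i => b i / d i) ⬝ᵥ (vecMulVec b b + diagonal d) *ᵥ fun i => b i / d i) =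
      (∑ i, b i ^ 2 / d i) / ((∑ i, b i ^ 2 / d i) + 1) := by
  set S := ∑ i, b i ^ 2 / d i
  have hdot : (b ⬝ᵥ fun i => b i / d i) = S :=
    Finset.sum_congr rfl fun i _ => by ring
  have hQ : ∑ i, d i * (b i / d i) ^ 2 = S :=
    Finset.sum_congr rfl fun i _ => by field_simp [hd i]
  rw [dotProduct_mulVec_vecMulVec_add_diagonal, hdot, hQ, sq, ← mul_add_one S S]
  rcases eq_or_ne S 0 with hS | hS
  · simp [hS]
  · exact mul_div_mul_left S _ hS

end WeightedRayleigh

theorem stmt_5_general (M : ℕ) (β : Fin M → ℝ)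
    (hβ : ∀ i, 0 ≤ β i ∧ β i < 1)
    (S : ℝ) (hS : S = ∑ i, β i ^ 2 / (1 - β i ^ 2)) :
    (∀ x : Fin M → ℝ, x ≠ 0 →
      (β ⬝ᵥ x) ^ 2 /
        (x ⬝ᵥ (Matrix.vecMulVec β β +
          Matrix.diagonal (fun i => 1 - β i ^ 2)).mulVec x) ≤ S / (S + 1)) ∧
    ((β ⬝ᵥ (fun i => β i / (1 - β i ^ 2))) ^ 2 /
        ((fun i => β i / (1 - β i ^ 2)) ⬝ᵥ (Matrix.vecMulVec β β +
          Matrix.diagonal (fun i => 1 - β i ^ 2)).mulVec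
            (fun i => β i / (1 - β i ^ 2))) = S / (S + 1)) := by
  have hd : ∀ i, 0 < 1 - β i ^ 2 := fun i => by
    obtain ⟨h0, h1⟩ := hβ i
    nlinarith
  subst hS
  exact ⟨fun x hx => sq_dotProduct_div_le hd hx,
    sq_dotProduct_div_eq_of_optimal fun i => (hd i).ne'⟩

theorem stmt_5 (M : ℕ) (β : Fin M → ℝ)
    (hβ : ∀ i, 0 ≤ β i ∧ β i < 1) (hpos : ∃ i, 0 < β i)
    (S : ℝ) (hS : S = ∑ i, β i ^ 2 / (1 - β i ^ 2)) :
    (∀ x : Fin M → ℝ, x ≠ 0 →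
      (β ⬝ᵥ x) ^ 2 /
        (x ⬝ᵥ (Matrix.vecMulVec β β +
          Matrix.diagonal (fun i => 1 - β i ^ 2)).mulVec x) ≤ S / (S + 1)) ∧
    ((β ⬝ᵥ (fun i => β i / (1 - β i ^ 2))) ^ 2 /
        ((fun i => β i / (1 - β i ^ 2)) ⬝ᵥ (Matrix.vecMulVec β β +
          Matrix.diagonal (fun i => 1 - β i ^ 2)).mulVec
            (fun i => β i / (1 - β i ^ 2))) = S / (S + 1)) :=
  stmt_5_general M β hβ S hS
end

section
/- Let M ≥ 2, θ : Fin M → ℝ with θ i > 0 for all i, and c : Fin M → ℝ with c i > 0 for all i. For each i define β i ^ 2 = ((θ i ^ 4 - c i)/(θ i ^ 4 + θ i ^ 2)) when θ i ^ 4 > c i and 0 otherwise, and set S = ∑ i, β i ^ 2 / (1 - β i ^ 2) = ∑ i, ((θ i ^ 4 - c i)/(θ i ^ 2 + c i)) · 𝟙{θ i ^ 4 > c i}. Assume S > 0. Then ∑ i, θ i ^ 4 / (c i + S·(θ i ^ 2 + c i)) ≥ 1, with strict inequality if θ i ^ 4 > c i for at least two indices i. -/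
theorem stmt_8 (M : ℕ) (hM : 2 ≤ M) (θ c : Fin M → ℝ)
    (hθ : ∀ i, 0 < θ i) (hc : ∀ i, 0 < c i)
    (S : ℝ)
    (hS : S = ∑ i, if c i < θ i ^ 4 then (θ i ^ 4 - c i) / (θ i ^ 2 + c i) else 0)
    (hSpos : 0 < S) :
    1 ≤ ∑ i, θ i ^ 4 / (c i + S * (θ i ^ 2 + c i)) ∧
    ((∃ i j : Fin M, i ≠ j ∧ c i < θ i ^ 4 ∧ c j < θ j ^ 4) →
      1 < ∑ i, θ i ^ 4 / (c i + S * (θ i ^ 2 + c i))) := by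
  set s : Fin M → ℝ := fun i => if c i < θ i ^ 4 then (θ i ^ 4 - c i) / (θ i ^ 2 + c i) else 0
    with hsdef
  have hb : ∀ i, 0 < θ i ^ 2 + c i := fun i => by nlinarith [sq_nonneg (θ i), hc i]
  have hs0 : ∀ i, 0 ≤ s i := by
    intro i
    simp only [hsdef]
    split_ifs with h
    · exact div_nonneg (by linarith) (hb i).le
    · exact le_refl 0
  have hden : ∀ i, 0 < c i + S * (θ i ^ 2 + c i) := by
    intro i
    have := hc i
    have := hb i
    nlinarith
  have hsb : ∀ i, c i < θ i ^ 4 → s i * (θ i ^ 2 + c i) = θ i ^ 4 - c i := by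
    intro i h
    simp only [hsdef, if_pos h]
    rw [div_mul_cancel₀]
    exact (hb i).ne'
  have key : ∀ i, s i / S ≤ θ i ^ 4 / (c i + S * (θ i ^ 2 + c i)) := by
    intro i
    by_cases h : c i < θ i ^ 4
    · rw [div_le_div_iff₀ hSpos (hden i)]
      have h1 := hsb i h
      have h2 : s i ≤ S := by
        rw [hS]
        exact Finset.single_le_sum (fun j _ => hs0 j) (Finset.mem_univ i)
      nlinarith [hc i, hb i, hs0 i]
    · have : s i = 0 := by simp [hsdef, h]
      rw [this]
      simp only [zero_div]
      exact div_nonneg (by positivity) (hden i).le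
  have hsum : ∑ i, s i / S = 1 := by
    rw [← Finset.sum_div, ← hS, div_self hSpos.ne']
  constructor
  · calc (1:ℝ) = ∑ i, s i / S := hsum.symm
      _ ≤ _ := Finset.sum_le_sum (fun i _ => key i)
  · rintro ⟨i, j, hij, hi, hj⟩
    have hsj : 0 < s j := by
      simp only [hsdef, if_pos hj]
      exact div_pos (by linarith) (hb j)
    have hsi : s i < S := by
      have hsub : ({i, j} : Finset (Fin M)) ⊆ Finset.univ := Finset.subset_univ _
      have h1 : ∑ k ∈ ({i, j} : Finset (Fin M)), s k ≤ S := by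
        rw [hS]
        exact Finset.sum_le_sum_of_subset_of_nonneg hsub (fun k _ _ => hs0 k)
      rw [Finset.sum_pair hij] at h1
      linarith
    have hstrict : s i / S < θ i ^ 4 / (c i + S * (θ i ^ 2 + c i)) := by
      rw [div_lt_div_iff₀ hSpos (hden i)]
      have h1 := hsb i hi
      nlinarith [hc i, hb i]
    calc (1:ℝ) = ∑ k, s k / S := hsum.symm
      _ < _ := Finset.sum_lt_sum (fun k _ => key k) ⟨i, Finset.mem_univ i, hstrict⟩
end

section
/- Let M ≥ 2, and let x : Fin M → ℝ, c : Fin M → ℝ satisfy 0 < c i ≤ 1 and x i ^ 2 > c i (hence x i > 0) for all i. Let T = ∑ i, x i and C = ∑ i, c i. Then ∑ i, (x i ^ 2 - c i)/(x i + c i) < (T^2 - C)/(T + C). -/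
theorem stmt_10 (M : ℕ) (hM : 2 ≤ M) (x c : Fin M → ℝ)
    (hc : ∀ i, 0 < c i ∧ c i ≤ 1) (hx : ∀ i, c i < x i ^ 2) (hxpos : ∀ i, 0 < x i) :
    ∑ i, (x i ^ 2 - c i) / (x i + c i)
      < ((∑ i, x i) ^ 2 - ∑ i, c i) / ((∑ i, x i) + ∑ i, c i) := by
  have hM0 : 0 < M := by omega
  haveI : Nonempty (Fin M) := ⟨⟨0, hM0⟩⟩
  set T := ∑ i, x i with hT
  set C := ∑ i, c i with hC
  have hTpos : 0 < T := Finset.sum_pos (fun i _ => hxpos i) Finset.univ_nonempty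
  have hCpos : 0 < C := Finset.sum_pos (fun i _ => (hc i).1) Finset.univ_nonempty
  have hden' : ∀ i, 0 < x i + c i := fun i => add_pos (hxpos i) (hc i).1
  have hTC : 0 < T + C := by linarith
  -- key per-term inequality
  have key : ∀ i, c i * (T + 1) / (T + C) < c i * (x i + 1) / (x i + c i) := by
    intro i
    rw [div_lt_div_iff₀ hTC (hden' i)]
    have hne : (Finset.univ.erase i).Nonempty := by
      rw [← Finset.card_pos, Finset.card_erase_of_mem (Finset.mem_univ i), Finset.card_univ,
        Fintype.card_fin]
      omega
    have e1 : ∑ j ∈ Finset.univ.erase i, x j = T - x i := by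
      have := Finset.sum_erase_add Finset.univ x (Finset.mem_univ i)
      linarith
    have e2 : ∑ j ∈ Finset.univ.erase i, c j = C - c i := by
      have := Finset.sum_erase_add Finset.univ c (Finset.mem_univ i)
      linarith
    have hpos : 0 < ∑ j ∈ Finset.univ.erase i, (x j * (1 - c i) + c j * (1 + x i)) := by
      apply Finset.sum_pos _ hne
      intro j _
      have h1 : 0 ≤ x j * (1 - c i) := by
        have := (hc i).2
        have := hxpos j
        nlinarith
      have h2 : 0 < c j * (1 + x i) := by
        have := (hc j).1
        have := hxpos i
        nlinarith
      linarith
    have esum : ∑ j ∈ Finset.univ.erase i, (x j * (1 - c i) + c j * (1 + x i))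
        = (T - x i) * (1 - c i) + (C - c i) * (1 + x i) := by
      rw [Finset.sum_add_distrib, ← Finset.sum_mul, ← Finset.sum_mul, e1, e2]
    have hkey : (T + 1) * (x i + c i) < (x i + 1) * (T + C) := by nlinarith [hpos, esum]
    have hci := (hc i).1
    nlinarith
  have hsum : ∑ i, c i * (T + 1) / (T + C) < ∑ i, c i * (x i + 1) / (x i + c i) :=
    Finset.sum_lt_sum_of_nonempty Finset.univ_nonempty (fun i _ => key i)
  have hl : ∑ i, c i * (T + 1) / (T + C) = C * (T + 1) / (T + C) := by
    rw [← Finset.sum_div, ← Finset.sum_mul]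
  have hterm : ∀ i, (x i ^ 2 - c i) / (x i + c i) = x i - c i * (x i + 1) / (x i + c i) := by
    intro i
    have := (hden' i).ne'
    field_simp
    ring
  have hlhs : ∑ i, (x i ^ 2 - c i) / (x i + c i) = T - ∑ i, c i * (x i + 1) / (x i + c i) := by
    rw [hT, ← Finset.sum_sub_distrib]
    exact Finset.sum_congr rfl (fun i _ => hterm i)
  have hrhs : (T ^ 2 - C) / (T + C) = T - C * (T + 1) / (T + C) := by
    field_simp
    ring
  rw [hlhs, hrhs]
  linarith [hl ▸ hsum]
end

section
/- Let Σ = diag(s 1, …, s n) be a diagonal matrix, u ∈ ℝ^n, and λ ∈ ℝ with λ ≠ s i for all i and λ an eigenvalue of R = u uᵀ + Σ. Then 1 + ∑ i, u i ^ 2 / (s i - λ) = 0, and conversely any λ not among the s i satisfying this secular equation is an eigenvalue of R, with eigenvector ξ = (Σ - λ I)⁻¹ u (up to scaling). -/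
open Matrix

theorem stmt_13 (n : ℕ) (s u : Fin n → ℝ) (lam : ℝ) (hlam : ∀ i, lam ≠ s i) :
    ((∃ v : Fin n → ℝ, v ≠ 0 ∧
        (Matrix.vecMulVec u u + Matrix.diagonal s).mulVec v = lam • v) →
      1 + ∑ i, u i ^ 2 / (s i - lam) = 0) ∧
    ((1 + ∑ i, u i ^ 2 / (s i - lam) = 0) →
      (Matrix.diagonal s - lam • (1 : Matrix (Fin n) (Fin n) ℝ))⁻¹.mulVec u ≠ 0 ∧
      (Matrix.vecMulVec u u + Matrix.diagonal s).mulVec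
          ((Matrix.diagonal s - lam • (1 : Matrix (Fin n) (Fin n) ℝ))⁻¹.mulVec u)
        = lam • (Matrix.diagonal s - lam • (1 : Matrix (Fin n) (Fin n) ℝ))⁻¹.mulVec u) := by
  have hdne : ∀ i, s i - lam ≠ 0 := fun i => sub_ne_zero.mpr (fun h => hlam i h.symm)
  have hD : Matrix.diagonal s - lam • (1 : Matrix (Fin n) (Fin n) ℝ)
      = Matrix.diagonal (fun i => s i - lam) := by
    ext i j
    by_cases h : i = j <;> simp [Matrix.one_apply, Matrix.diagonal, h]
  have hinv : (Matrix.diagonal s - lam • (1 : Matrix (Fin n) (Fin n) ℝ))⁻¹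
      = Matrix.diagonal (fun i => (s i - lam)⁻¹) := by
    rw [hD]
    apply Matrix.inv_eq_right_inv
    rw [Matrix.diagonal_mul_diagonal]
    have : (fun i => (s i - lam) * (s i - lam)⁻¹) = fun _ => (1 : ℝ) := by
      funext i; exact mul_inv_cancel₀ (hdne i)
    rw [this, Matrix.diagonal_one]
  have hxi : (Matrix.diagonal s - lam • (1 : Matrix (Fin n) (Fin n) ℝ))⁻¹.mulVec u
      = fun i => u i / (s i - lam) := by
    rw [hinv]
    funext i
    simp [Matrix.mulVec_diagonal, div_eq_mul_inv, mul_comm]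
  have hcomp : ∀ (w : Fin n → ℝ) (i : Fin n),
      (Matrix.vecMulVec u u + Matrix.diagonal s).mulVec w i
        = u i * (u ⬝ᵥ w) + s i * w i := by
    intro w i
    simp only [Matrix.add_mulVec, Pi.add_apply, Matrix.mulVec_diagonal]
    congr 1
    simp [Matrix.mulVec, Matrix.vecMulVec_apply, dotProduct, Finset.mul_sum, mul_assoc]
  constructor
  · rintro ⟨v, hv0, hveq⟩
    set c : ℝ := u ⬝ᵥ v with hc
    have hvi : ∀ i, v i = -c * u i / (s i - lam) := by
      intro i
      have h := congrFun hveq i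
      rw [hcomp] at h
      simp only [Pi.smul_apply, smul_eq_mul] at h
      rw [eq_div_iff (hdne i)]
      linear_combination h
    have hcne : c ≠ 0 := by
      intro h0
      apply hv0
      funext i
      simp [hvi i, h0]
    have hsum : c = -c * ∑ i, u i ^ 2 / (s i - lam) := by
      have : c = ∑ i, u i * v i := rfl
      rw [this, Finset.mul_sum]
      apply Finset.sum_congr rfl
      intro i _
      rw [hvi i]
      field_simp [hdne i]
      rw [← this]
    have hz : c * (1 + ∑ i, u i ^ 2 / (s i - lam)) = c * 0 := by
      rw [mul_zero]; linear_combination hsum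
    exact mul_left_cancel₀ hcne hz
  · intro hsec
    have hS : ∑ i, u i ^ 2 / (s i - lam) = -1 := by linarith
    rw [hxi]
    constructor
    · intro h0
      have hu : ∀ i, u i = 0 := by
        intro i
        have := congrFun h0 i
        simp only [Pi.zero_apply] at this
        exact (div_eq_zero_iff.mp this).resolve_right (hdne i)
      rw [Finset.sum_eq_zero (fun i _ => by simp [hu i])] at hS
      norm_num at hS
    · funext i
      rw [hcomp]
      have hdot : u ⬝ᵥ (fun i => u i / (s i - lam)) = -1 := by
        rw [← hS, dotProduct]
        apply Finset.sum_congr rfl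
        intro i _
        rw [pow_two, mul_div_assoc]
      rw [hdot]
      simp only [Pi.smul_apply, smul_eq_mul]
      field_simp [hdne i]
      ring
end

section
/- Fix ε ∈ (0, 1) and M ≥ exp(2/ε) (M a positive integer). Let θ i = 1 and c i = 2i - 1 for i = 1, …, M. Then (a) for every nonempty subset S ⊆ {1,…,M}, (∑_{i ∈ S} θ i ^ 2)^2 ≤ ∑_{i ∈ S} c i, with equality when S = {1,…,m} is a prefix; (b) θ i ^ 4 ≤ c i for all i; and (c) ∑_{i=1}^M ε / (2i - 1 + 1 - ε) ≥ 1, i.e. f(1-ε) ≥ 1 where f(x) = ∑_i (1-x)/(2i-1 + x), so the unique root x⋆ of f(x) = 1 in (0,1) satisfies x⋆ ≥ 1 - ε. -/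
/-!
All `θ i = 1`, so a set `S` of tables carries signal `(#S)²` against the noise `∑_{i ∈ S} (2i + 1)`,
a sum of `#S` distinct odd numbers, which is at least `#S²` with equality for prefixes.
The optimal weighting instead solves `f x = 1` with `f x = ∑ᵢ (1 - x) / (cᵢ + x)` strictly
decreasing, and `f (1 - ε) ≥ (ε / 2) · H_M ≥ (ε / 2) · log M ≥ 1`, so the root is at least `1 - ε`.
-/

open Finset

theorem Finset.sq_card_le_sum_two_mul_add_one (S : Finset ℕ) :
    #S ^ 2 ≤ ∑ i ∈ S, (2 * i + 1) := by
  induction S using Finset.induction_on_max with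
  | empty => simp
  | insert a s ha ih =>
    have ha' : a ∉ s := fun h => lt_irrefl a (ha a h)
    -- the new maximum contributes `2a + 1 ≥ 2#s + 1 = (#s + 1)² - #s²`
    have hs : #s ≤ a := by simpa using card_le_card fun x hx => mem_range.2 (ha x hx)
    rw [sum_insert ha', card_insert_of_notMem ha']
    nlinarith

theorem Fin.sq_card_le_sum_two_mul_add_one {n : ℕ} (S : Finset (Fin n)) :
    (#S : ℝ) ^ 2 ≤ ∑ i ∈ S, (2 * ((i : ℕ) : ℝ) + 1) := by
  have h := (S.map Fin.valEmbedding).sq_card_le_sum_two_mul_add_one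
  rw [card_map, sum_map] at h
  exact_mod_cast h

theorem Finset.sum_range_two_mul_add_one {R : Type*} [CommSemiring R] (m : ℕ) :
    ∑ i ∈ range m, (2 * (i : R) + 1) = (m : R) ^ 2 := by
  induction m with
  | zero => simp
  | succ m ih => rw [sum_range_succ, ih]; push_cast; ring

theorem Fin.sum_filter_val_lt {β : Type*} [AddCommMonoid β] {n m : ℕ} (hm : m ≤ n)
    (f : ℕ → β) : ∑ i ∈ univ.filter (fun i : Fin n => (i : ℕ) < m), f i = ∑ i ∈ range m, f i := by
  refine (sum_map _ Fin.valEmbedding f).symm.trans (congrArg (Finset.sum · f) ?_)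
  ext j
  simp only [mem_map, mem_filter, mem_univ, true_and, Fin.valEmbedding_apply, mem_range]
  exact ⟨fun ⟨i, hi, hij⟩ => hij ▸ hi, fun hj => ⟨⟨j, hj.trans_le hm⟩, hj, rfl⟩⟩

theorem Real.log_le_sum_range_inv_succ (n : ℕ) :
    Real.log n ≤ ∑ i ∈ range n, ((i : ℝ) + 1)⁻¹ := by
  calc Real.log n ≤ Real.log ↑(n + 1) := by
        rcases n.eq_zero_or_pos with rfl | hn
        · simp
        · exact Real.log_le_log (by positivity) (by push_cast; linarith)
    _ ≤ harmonic n := log_add_one_le_harmonic n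
    _ = _ := by simp [harmonic]

theorem one_le_sum_range_div_two_mul_add_two_sub {ε : ℝ} (hε : 0 < ε) (hε2 : ε < 2) {M : ℕ}
    (hM : Real.exp (2 / ε) ≤ M) : 1 ≤ ∑ i ∈ range M, ε / (2 * i + 2 - ε) := by
  have hlog : 2 / ε ≤ Real.log M :=
    (Real.le_log_iff_exp_le ((Real.exp_pos _).trans_le hM)).2 hM
  calc (1 : ℝ) = ε / 2 * (2 / ε) := by field_simp
    _ ≤ ε / 2 * ∑ i ∈ range M, ((i : ℝ) + 1)⁻¹ := by
        gcongr; exact hlog.trans (Real.log_le_sum_range_inv_succ M)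
    _ = ∑ i ∈ range M, ε / (2 * i + 2) := by
        rw [mul_sum]; refine sum_congr rfl fun i _ => ?_; field_simp
    _ ≤ _ := sum_le_sum fun i _ => by gcongr <;> first | positivity | linarith

theorem strictAntiOn_one_sub_div_add {c : ℝ} (hc : -1 < c) :
    StrictAntiOn (fun x => (1 - x) / (c + x)) (Set.Ioi (-c)) := by
  intro y hy x hx hyx
  simp only [Set.mem_Ioi] at hx hy
  rw [div_lt_div_iff₀ (by linarith) (by linarith)]
  nlinarith

theorem stmt_15 (ε : ℝ) (hε : 0 < ε ∧ ε < 1) (M : ℕ)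
    (hM : Real.exp (2 / ε) ≤ (M : ℝ))
    (θ c : Fin M → ℝ) (hθ : ∀ i, θ i = 1)
    (hc : ∀ i, c i = 2 * ((i : ℕ) + 1) - 1) :
    (∀ S : Finset (Fin M), (∑ i ∈ S, θ i ^ 2) ^ 2 ≤ ∑ i ∈ S, c i) ∧
    (∀ m : ℕ, m ≤ M →
      (∑ i ∈ Finset.univ.filter (fun i : Fin M => (i : ℕ) < m), θ i ^ 2) ^ 2
        = ∑ i ∈ Finset.univ.filter (fun i : Fin M => (i : ℕ) < m), c i) ∧
    (∀ i, θ i ^ 4 ≤ c i) ∧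
    (1 ≤ ∑ i, ε / (c i + 1 - ε)) ∧
    (∀ x ∈ Set.Ioo (0 : ℝ) 1,
      (∑ i, θ i ^ 4 * (1 - x) / (c i + x * θ i ^ 2)) = 1 → 1 - ε ≤ x) := by
  obtain ⟨hε0, hε1⟩ := hε
  have hc' : ∀ i : Fin M, c i = 2 * (i : ℕ) + 1 := fun i => by rw [hc]; ring
  have hsum : 1 ≤ ∑ i, ε / (c i + 1 - ε) := by
    have h := one_le_sum_range_div_two_mul_add_two_sub hε0 (by linarith) hM
    rw [← Fin.sum_univ_eq_sum_range] at h
    simpa only [hc', add_assoc, one_add_one_eq_two] using h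
  refine ⟨fun S => ?_, fun m hm => ?_, fun i => ?_, hsum, fun x ⟨hx0, _⟩ hfx => ?_⟩
  · simpa [hθ, hc'] using Fin.sq_card_le_sum_two_mul_add_one S
  · simp only [hθ, hc', one_pow, Fin.sum_filter_val_lt hm (fun _ => (1 : ℝ)),
      Fin.sum_filter_val_lt hm (fun j => 2 * (j : ℝ) + 1), sum_range_two_mul_add_one,
      sum_const, card_range, nsmul_eq_mul, mul_one]
  · rw [hθ, hc']; simp
  · by_contra! hlt
    have : Nonempty (Fin M) := ⟨⟨0, by exact_mod_cast (Real.exp_pos _).trans_le hM⟩⟩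
    refine (hsum.trans_lt (sum_lt_sum_of_nonempty univ_nonempty fun i _ => ?_)).ne' hfx
    have hci : 0 ≤ c i := by rw [hc']; positivity
    simpa [hθ, add_sub_assoc] using strictAntiOn_one_sub_div_add (c := c i) (by linarith)
      (show -c i < x by linarith) (show -c i < 1 - ε by linarith) hlt
end
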